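/- Let p = x₁ + iy₁, q = x₂ + iy₂, and s = x + iy be points of the upper half-plane ℍ, and let 0 < α < π. Then the hyperbolic cosine rule cosh(d_ℍ(p,q)) = cosh(d_ℍ(p,s))·cosh(d_ℍ(q,s)) − sinh(d_ℍ(p,s))·sinh(d_ℍ(q,s))·cos(α) holds if and only if φ̃_{p,q,α}(s) = 0. (This is the characterization of the isoptic curve C_α(p,q) in the upper half-plane model.) -/

import Mathlib

/-!
Writing `p = x₁ + iy₁`, `s = x + iy`, one has `(x₁ - x)² + y₁² + y² = 2 y₁ y cosh d(p, s)` and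
`√(|p - s|² |p - s̄|²) = 2 y₁ y sinh d(p, s)`, and likewise for the other pairs. Hence
`φ̃_{p,q,α}(s) = 4 y₁ y₂ y² (cosh d(p,s) cosh d(q,s) - sinh d(p,s) sinh d(q,s) cos α - cosh d(p,q))`,
and the positive factor `4 y₁ y₂ y²` can be cancelled.
-/

open UpperHalfPlane

/-- The isoptic-curve expression `φ̃_{p,q,α}(s)` in the upper half-plane model, for
`p = x₁ + iy₁`, `q = x₂ + iy₂`, `s = x + iy`. -/
noncomputable def phiUH (p q : UpperHalfPlane) (α : ℝ) (s : UpperHalfPlane) : ℝ :=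
  ((p.re - s.re) ^ 2 + p.im ^ 2 + s.im ^ 2) * ((q.re - s.re) ^ 2 + q.im ^ 2 + s.im ^ 2)
    - 2 * s.im ^ 2 * ((p.re - q.re) ^ 2 + p.im ^ 2 + q.im ^ 2)
    - Real.cos α * Real.sqrt
        (((p.re - s.re) ^ 2 + (p.im - s.im) ^ 2) * ((p.re - s.re) ^ 2 + (p.im + s.im) ^ 2) *
          ((q.re - s.re) ^ 2 + (q.im - s.im) ^ 2) * ((q.re - s.re) ^ 2 + (q.im + s.im) ^ 2))

open ComplexConjugate

namespace UpperHalfPlane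

lemma sinh_dist (z w : ℍ) :
    Real.sinh (dist z w) = dist (z : ℂ) w * dist (z : ℂ) (conj (w : ℂ)) / (2 * z.im * w.im) := by
  have him : √(z.im * w.im) ^ 2 = z.im * w.im := Real.sq_sqrt (by positivity)
  rw [← mul_div_cancel₀ (dist z w) two_ne_zero, Real.sinh_two_mul, sinh_half_dist,
    cosh_half_dist]
  field_simp
  rw [him]; ring

lemma sq_add_sq_add_sq_eq_cosh_dist (z w : ℍ) :
    (z.re - w.re) ^ 2 + z.im ^ 2 + w.im ^ 2 = 2 * z.im * w.im * Real.cosh (dist z w) := by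
  have hdist : dist (z : ℂ) w ^ 2 = (z.re - w.re) ^ 2 + (z.im - w.im) ^ 2 := by
    rw [Complex.dist_eq_re_im, Real.sq_sqrt (by positivity)]; rfl
  rw [cosh_dist, hdist]
  field_simp
  ring

lemma sqrt_mul_eq_sinh_dist (z w : ℍ) :
    √(((z.re - w.re) ^ 2 + (z.im - w.im) ^ 2) * ((z.re - w.re) ^ 2 + (z.im + w.im) ^ 2)) =
      2 * z.im * w.im * Real.sinh (dist z w) := by
  have hconj : dist (z : ℂ) (conj (w : ℂ)) = √((z.re - w.re) ^ 2 + (z.im + w.im) ^ 2) := by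
    rw [Complex.dist_eq_re_im, Complex.conj_re, Complex.conj_im, sub_neg_eq_add]; rfl
  rw [sinh_dist, hconj, Complex.dist_eq_re_im, Real.sqrt_mul (by positivity)]
  field_simp
  rfl

end UpperHalfPlane

lemma phiUH_eq (p q : ℍ) (α : ℝ) (s : ℍ) :
    phiUH p q α s = 4 * p.im * q.im * s.im ^ 2 *
      (Real.cosh (dist p s) * Real.cosh (dist q s)
        - Real.sinh (dist p s) * Real.sinh (dist q s) * Real.cos α - Real.cosh (dist p q)) := by
  rw [phiUH, mul_assoc _ ((q.re - s.re) ^ 2 + _), Real.sqrt_mul (by positivity),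
    sq_add_sq_add_sq_eq_cosh_dist, sq_add_sq_add_sq_eq_cosh_dist, sq_add_sq_add_sq_eq_cosh_dist,
    sqrt_mul_eq_sinh_dist, sqrt_mul_eq_sinh_dist]
  ring

theorem isoptic_curve_upperHalfPlane_general (p q s : UpperHalfPlane)
    (α : ℝ) :
    (Real.cosh (dist p q)
        = Real.cosh (dist p s) * Real.cosh (dist q s)
          - Real.sinh (dist p s) * Real.sinh (dist q s) * Real.cos α)
      ↔ phiUH p q α s = 0 := by
  have hpos : 4 * p.im * q.im * s.im ^ 2 ≠ 0 := by positivity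
  rw [phiUH_eq, mul_eq_zero, or_iff_right hpos, sub_eq_zero, eq_comm]

/-- Characterization of the isoptic curve `C_α(p,q)` in the upper half-plane model:
the hyperbolic cosine rule at `s` with angle `α` holds iff `φ̃_{p,q,α}(s) = 0`. -/
theorem isoptic_curve_upperHalfPlane (p q s : UpperHalfPlane)
    (α : ℝ) (hα₀ : 0 < α) (hαπ : α < Real.pi) :
    (Real.cosh (dist p q)
        = Real.cosh (dist p s) * Real.cosh (dist q s)
          - Real.sinh (dist p s) * Real.sinh (dist q s) * Real.cos α)
      ↔ phiUH p q α s = 0 :=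
  isoptic_curve_upperHalfPlane_general p q s α
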